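/- arXiv:1601.00047 — 2 statements merged into one kernel-verified Lean document; each statement's English description precedes it below -/
import Mathlib

section
/- If A = (ℂ[z_1,…,z_n], {,}) is a symmetric iterated T-Poisson Ore extension, then with respect to the same T-action A is a T-Poisson Ore extension in the reversed order of the variables: for each 2 ≤ k ≤ n, ℂ[z_1,…,z_{k−1}] is a Poisson subalgebra of A, and {f, z_k} = a'_k(f) z_k + b'_k(f) for all f ∈ ℂ[z_1,…,z_{k−1}], where a'_k = h'_k|_{ℂ[z_1,…,z_{k−1}]} and b'_k is the unique derivation of ℂ[z_1,…,z_{k−1}] with b'_k(z_i) = b_i(z_k) ∈ ℂ[z_{i+1},…,z_{k−1}] for 1 ≤ i ≤ k−1. Moreover, for any h ∈ Lie(T), [h|_{ℂ[z_1,…,z_{k−1}]}, b'_k] = λ_k(h) b'_k as derivations of ℂ[z_1,…,z_{k−1}]. -/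
/-!
On generators, `{z_i, z_j} = λ_j(h_i) z_i z_j + b_i(z_j)` for `i < j`, with
`b_i(z_j) ∈ ℂ[z_{i+1},…,z_{j-1}]`; since `f ↦ {f, g}` is a derivation, `ℂ[z_1,…,z_{k-1}]` is
closed under the bracket. The candidate `b'_k(f) := {f, z_k} - z_k h'_k(f)` is a derivation of
the whole ring, and the symmetry condition `λ_i(h'_k) = λ_k(h_i)` makes it send `z_i` to
`b_i(z_k)`, hence preserve `ℂ[z_1,…,z_{k-1}]`. As `𝔱` acts by commuting Poisson derivations and
`z_k` has weight `λ_k`, so does `b'_k`.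
-/

noncomputable section

open MvPolynomial

/-- The polynomial algebra `ℂ[z_1,…,z_n]`, with `z_i = X i`. -/
abbrev PA (n : ℕ) := MvPolynomial (Fin n) ℂ

/-- The subalgebra `ℂ[z_{i+1},…,z_n]` of `ℂ[z_1,…,z_n]`. -/
def tailAlg (n : ℕ) (i : Fin n) : Subalgebra ℂ (PA n) :=
  MvPolynomial.supported ℂ {j : Fin n | i < j}

/-- The subalgebra `ℂ[z_1,…,z_{k-1}]` of `ℂ[z_1,…,z_n]`. -/
def headAlg (n : ℕ) (k : Fin n) : Subalgebra ℂ (PA n) :=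
  MvPolynomial.supported ℂ {j : Fin n | j < k}

/-- `d` restricts to a (ℂ-linear) derivation of the subalgebra `S`. -/
def IsDerivOn {n : ℕ} (S : Subalgebra ℂ (PA n)) (d : PA n → PA n) : Prop :=
  (∀ x ∈ S, d x ∈ S) ∧ (∀ x y : PA n, d (x + y) = d x + d y) ∧
    (∀ (c : ℂ) (x : PA n), d (c • x) = c • d x) ∧
    ∀ x ∈ S, ∀ y ∈ S, d (x * y) = x * d y + y * d x

/-- The derivation of `ℂ[z_1,…,z_n]` by which `h ∈ 𝔱 = Lie(T)` acts, for the rational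
torus action under which each `z_j` is a weight vector of weight `λ_j`:
`h(z_j) = λ_j(h) z_j`. -/
def actD {n : ℕ} {𝔱 : Type*} [AddCommGroup 𝔱] [Module ℂ 𝔱]
    (lam : Fin n → (𝔱 →ₗ[ℂ] ℂ)) (h : 𝔱) : PA n → PA n := fun f =>
  (MvPolynomial.mkDerivation ℂ fun j => lam j h • (X j : PA n)) f

namespace Derivation

variable {R A : Type*} [CommRing R] [CommRing A] [Algebra R A]

theorem map_mem_adjoin (D : Derivation R A A) {s : Set A}
    (hs : ∀ x ∈ s, D x ∈ Algebra.adjoin R s) {x : A} (hx : x ∈ Algebra.adjoin R s) :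
    D x ∈ Algebra.adjoin R s := by
  induction hx using Algebra.adjoin_induction with
  | mem x hx => exact hs x hx
  | algebraMap r => simp
  | add x y _ _ hx hy => simpa only [map_add] using add_mem hx hy
  | mul x y hx' hy' hx hy =>
    rw [D.leibniz]
    exact add_mem (Subalgebra.mul_mem _ hx' hy) (Subalgebra.mul_mem _ hy' hx)

end Derivation

section PoissonBracket

variable {R A : Type*} [CommRing R] [CommRing A] [Algebra R A] {pb : A → A → A}

def pbDeriv (hadd : ∀ f g h : A, pb (f + g) h = pb f h + pb g h)
    (hsmul : ∀ (c : R) (f g : A), pb (c • f) g = c • pb f g)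
    (hskew : ∀ f g : A, pb f g = - pb g f)
    (hleib : ∀ f g h : A, pb f (g * h) = pb f g * h + g * pb f h) (g : A) :
    Derivation R A A :=
  Derivation.mk' ⟨⟨(pb · g), (hadd · · g)⟩, (hsmul · · g)⟩ fun x y => by
    change pb (x * y) g = x * pb y g + y * pb x g
    rw [hskew, hleib, hskew g x, hskew g y]
    ring

theorem pb_mem_adjoin (hadd : ∀ f g h : A, pb (f + g) h = pb f h + pb g h)
    (hsmul : ∀ (c : R) (f g : A), pb (c • f) g = c • pb f g)
    (hskew : ∀ f g : A, pb f g = - pb g f)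
    (hleib : ∀ f g h : A, pb f (g * h) = pb f g * h + g * pb f h) {s : Set A}
    (hs : ∀ x ∈ s, ∀ y ∈ s, pb x y ∈ Algebra.adjoin R s) {f g : A}
    (hf : f ∈ Algebra.adjoin R s) (hg : g ∈ Algebra.adjoin R s) :
    pb f g ∈ Algebra.adjoin R s := by
  have hgen : ∀ y ∈ s, ∀ f ∈ Algebra.adjoin R s, pb f y ∈ Algebra.adjoin R s :=
    fun y hy f hf => (pbDeriv hadd hsmul hskew hleib y).map_mem_adjoin (hs · · y hy) hf
  refine (pbDeriv hadd hsmul hskew hleib g).map_mem_adjoin (fun x hx => ?_) hf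
  change pb x g ∈ _
  rw [hskew]
  exact neg_mem (hgen x hx g hg)

end PoissonBracket

section Torus

variable {n : ℕ} {𝔱 : Type*} [AddCommGroup 𝔱] [Module ℂ 𝔱] (lam : Fin n → 𝔱 →ₗ[ℂ] ℂ)

def actDer (t : 𝔱) : Derivation ℂ (PA n) (PA n) :=
  mkDerivation ℂ fun j => lam j t • X j

theorem actD_eq_actDer (t : 𝔱) : actD lam t = actDer lam t := rfl

theorem actD_X (t : 𝔱) (j : Fin n) : actD lam t (X j) = lam j t • X j :=
  mkDerivation_X _ _ _

theorem actD_comm (t s : 𝔱) (f : PA n) :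
    actD lam t (actD lam s f) = actD lam s (actD lam t f) := by
  have hcomm : ⁅actDer lam t, actDer lam s⁆ = 0 := by
    refine derivation_ext fun j => ?_
    simp only [Derivation.commutator_apply, actDer, mkDerivation_X, Derivation.map_smul,
      smul_smul, mul_comm, sub_self, Derivation.zero_apply]
  simpa [Derivation.commutator_apply, sub_eq_zero, actD_eq_actDer] using
    congr($hcomm f)

theorem lie_actDer_pbDeriv_sub_smul_actDer {pb : PA n → PA n → PA n}
    (hadd : ∀ f g h : PA n, pb (f + g) h = pb f h + pb g h)
    (hsmul : ∀ (c : ℂ) (f g : PA n), pb (c • f) g = c • pb f g)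
    (hskew : ∀ f g : PA n, pb f g = - pb g f)
    (hleib : ∀ f g h : PA n, pb f (g * h) = pb f g * h + g * pb f h)
    (hact : ∀ (t : 𝔱) (f g : PA n),
      actD lam t (pb f g) = pb (actD lam t f) g + pb f (actD lam t g))
    {t : 𝔱} {g : PA n} {μ : ℂ} (hg : actD lam t g = μ • g) (s : 𝔱) :
    ⁅actDer lam t, pbDeriv hadd hsmul hskew hleib g - g • actDer lam s⁆ =
      μ • (pbDeriv hadd hsmul hskew hleib g - g • actDer lam s) := by
  refine Derivation.ext fun f => ?_
  have hpb : pb f (μ • g) = μ • pb f g := by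
    rw [hskew, hsmul, hskew g f, smul_neg, neg_neg]
  change actD lam t (pb f g - g * actD lam s f) - (pb (actD lam t f) g -
    g * actD lam s (actD lam t f)) = μ • (pb f g - g * actD lam s f)
  rw [actD_eq_actDer lam t, map_sub, Derivation.leibniz, ← actD_eq_actDer lam t, hact, hg, hpb,
    actD_comm lam t s]
  simp only [smul_eq_C_mul]
  ring

end Torus

theorem Derivation.isDerivOn {n : ℕ} (D : Derivation ℂ (PA n) (PA n)) {S : Subalgebra ℂ (PA n)}
    (hS : ∀ x ∈ S, D x ∈ S) : IsDerivOn S D :=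
  ⟨hS, D.map_add, D.map_smul, fun x _ y _ => D.leibniz x y⟩

theorem IsDerivOn.eqOn_supported {n : ℕ} {s : Set (Fin n)} {d₁ d₂ : PA n → PA n}
    (h₁ : IsDerivOn (supported ℂ s) d₁) (h₂ : IsDerivOn (supported ℂ s) d₂)
    (h : ∀ i ∈ s, d₁ (X i) = d₂ (X i)) {f : PA n} (hf : f ∈ supported ℂ s) :
    d₁ f = d₂ f := by
  obtain ⟨-, add₁, smul₁, mul₁⟩ := h₁
  obtain ⟨-, add₂, smul₂, mul₂⟩ := h₂
  have map_one : ∀ d : PA n → PA n, (∀ x ∈ supported ℂ s, ∀ y ∈ supported ℂ s,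
      d (x * y) = x * d y + y * d x) → d 1 = 0 := fun d hmul => by
    simpa using hmul 1 (one_mem _) 1 (one_mem _)
  induction hf using Algebra.adjoin_induction with
  | mem x hx => obtain ⟨i, hi, rfl⟩ := hx; exact h i hi
  | algebraMap r =>
    rw [Algebra.algebraMap_eq_smul_one, smul₁, smul₂, map_one d₁ mul₁, map_one d₂ mul₂]
  | add x y _ _ hx hy => rw [add₁, add₂, hx, hy]
  | mul x y hx' hy' hx hy => rw [mul₁ x hx' y hy', mul₂ x hx' y hy', hx, hy]

section OreExtension

variable {n : ℕ} {𝔱 : Type*} [AddCommGroup 𝔱] [Module ℂ 𝔱] (lam : Fin n → 𝔱 →ₗ[ℂ] ℂ)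
  {pb : PA n → PA n → PA n} {a b : Fin n → PA n → PA n} {h : Fin n → 𝔱}

theorem pb_X_X_of_lt
    (hore : ∀ i : Fin n, (i : ℕ) + 1 < n →
      ∀ f ∈ tailAlg n i, pb (X i) f = X i * a i f + b i f)
    (ha_h : ∀ i : Fin n, (i : ℕ) + 1 < n → ∀ f ∈ tailAlg n i, a i f = actD lam (h i) f)
    {i j : Fin n} (hij : i < j) :
    pb (X i) (X j) = lam j (h i) • (X i * X j) + b i (X j) := by
  have hi : (i : ℕ) + 1 < n := by have := j.isLt; omega
  have hXj : X j ∈ tailAlg n i := X_mem_supported.mpr hij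
  rw [hore i hi _ hXj, ha_h i hi _ hXj, actD_X, mul_smul_comm]

theorem pb_X_X_mem_headAlg (hskew : ∀ f g : PA n, pb f g = - pb g f)
    (hore : ∀ i : Fin n, (i : ℕ) + 1 < n →
      ∀ f ∈ tailAlg n i, pb (X i) f = X i * a i f + b i f)
    (ha_h : ∀ i : Fin n, (i : ℕ) + 1 < n → ∀ f ∈ tailAlg n i, a i f = actD lam (h i) f)
    (hb_mem : ∀ i k : Fin n, i < k →
      b i (X k) ∈ MvPolynomial.supported ℂ {j : Fin n | i < j ∧ j < k})
    {i j k : Fin n} (hi : i < k) (hj : j < k) :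
    pb (X i) (X j) ∈ headAlg n k := by
  have hlt : ∀ {i j : Fin n}, i < j → j < k → pb (X i) (X j) ∈ headAlg n k := by
    intro i j hij hjk
    rw [pb_X_X_of_lt lam hore ha_h hij]
    refine add_mem (Subalgebra.smul_mem _ (mul_mem ?_ ?_) _)
      (supported_mono (fun l hl => hl.2.trans hjk) (hb_mem i j hij))
    · exact X_mem_supported.mpr (hij.trans hjk)
    · exact X_mem_supported.mpr hjk
  rcases lt_trichotomy i j with hij | rfl | hij
  · exact hlt hij hj
  · rw [CharZero.eq_neg_self_iff.mp (hskew (X i) (X i))]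
    exact zero_mem _
  · rw [hskew]
    exact neg_mem (hlt hij hi)

end OreExtension

theorem statement_17_general
    (n : ℕ) (𝔱 : Type*) [AddCommGroup 𝔱] [Module ℂ 𝔱]
    (lam : Fin n → (𝔱 →ₗ[ℂ] ℂ))
    (pb : PA n → PA n → PA n)
    (hadd : ∀ f g h : PA n, pb (f + g) h = pb f h + pb g h)
    (hsmul : ∀ (c : ℂ) (f g : PA n), pb (c • f) g = c • pb f g)
    (hskew : ∀ f g : PA n, pb f g = - pb g f)
    (hleib : ∀ f g h : PA n, pb f (g * h) = pb f g * h + g * pb f h)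
    (hact : ∀ (t : 𝔱) (f g : PA n),
      actD lam t (pb f g) = pb (actD lam t f) g + pb f (actD lam t g))
    (a b : Fin n → PA n → PA n) (h : Fin n → 𝔱)
    (hore : ∀ i : Fin n, (i : ℕ) + 1 < n →
      ∀ f ∈ tailAlg n i, pb (X i) f = X i * a i f + b i f)
    (ha_h : ∀ i : Fin n, (i : ℕ) + 1 < n → ∀ f ∈ tailAlg n i, a i f = actD lam (h i) f)
    (hb_mem : ∀ i k : Fin n, i < k →
      b i (X k) ∈ MvPolynomial.supported ℂ {j : Fin n | i < j ∧ j < k})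
    (h' : Fin n → 𝔱)
    (hlam_hk' : ∀ i k : Fin n, i < k → lam i (h' k) = lam k (h i)) :
    ∀ k : Fin n, 0 < (k : ℕ) →
      (∀ f ∈ headAlg n k, ∀ g ∈ headAlg n k, pb f g ∈ headAlg n k) ∧
      ∃ b' : PA n → PA n,
        IsDerivOn (headAlg n k) b' ∧
        (∀ i : Fin n, i < k → b' (X i) = b i (X k)) ∧
        (∀ b'' : PA n → PA n, IsDerivOn (headAlg n k) b'' →
          (∀ i : Fin n, i < k → b'' (X i) = b i (X k)) →
          ∀ f ∈ headAlg n k, b'' f = b' f) ∧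
        (∀ f ∈ headAlg n k, pb f (X k) = actD lam (h' k) f * X k + b' f) ∧
        (∀ t : 𝔱, ∀ f ∈ headAlg n k,
          actD lam t (b' f) - b' (actD lam t f) = lam k t • b' f) := by
  intro k _
  have hclosed : ∀ f ∈ headAlg n k, ∀ g ∈ headAlg n k, pb f g ∈ headAlg n k := by
    refine fun f hf g hg => pb_mem_adjoin hadd hsmul hskew hleib ?_ hf hg
    rintro _ ⟨i, hi, rfl⟩ _ ⟨j, hj, rfl⟩
    exact pb_X_X_mem_headAlg lam hskew hore ha_h hb_mem hi hj
  set D : Derivation ℂ (PA n) (PA n) :=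
    pbDeriv hadd hsmul hskew hleib (X k) - (X k : PA n) • actDer lam (h' k)
  have hDX : ∀ i < k, D (X i) = b i (X k) := by
    intro i hik
    change pb (X i) (X k) - X k * actD lam (h' k) (X i) = _
    rw [pb_X_X_of_lt lam hore ha_h hik, actD_X, hlam_hk' i k hik, mul_smul_comm, mul_comm,
      add_sub_cancel_left]
  have hD : IsDerivOn (headAlg n k) D := by
    refine D.isDerivOn fun f hf => D.map_mem_adjoin ?_ hf
    rintro _ ⟨i, hi, rfl⟩
    rw [hDX i hi]
    exact supported_mono (fun l hl => hl.2) (hb_mem i k hi)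
  refine ⟨hclosed, D, hD, hDX, fun b'' hb'' hb''X f hf => hb''.eqOn_supported hD
    (fun i hi => (hb''X i hi).trans (hDX i hi).symm) hf, fun f _ => ?_, fun t f _ => ?_⟩
  · change pb f (X k) = _ * X k + (pb f (X k) - X k * actD lam (h' k) f)
    ring
  · have hlie := lie_actDer_pbDeriv_sub_smul_actDer lam hadd hsmul hskew hleib hact
      (actD_X lam t k) (h' k)
    exact (Derivation.commutator_apply f).symm.trans (DFunLike.congr_fun hlie f)

/-- Lemma 5.7 of the paper.
Setting (Definition 5.4, in infinitesimal form): `A = (ℂ[z_1,…,z_n], pb)` is a polynomial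
Poisson algebra (`hadd`, `hsmul`, `hskew`, `hleib`, `hjac`) with a rational action of a
complex algebraic torus `T` by Poisson automorphisms (`hact`), for which each `z_i` is a
weight vector of weight `λ_i` (elements `h` of `𝔱 = Lie(T)` acting by the derivation
`actD lam h`, with `actD lam h (z_j) = λ_j(h) z_j`).  `A` is an iterated `T`-Poisson Ore
extension: for `1 ≤ i ≤ n-1` (i.e. `(i:ℕ)+1 < n` in `0`-indexed form) there are
derivations `a_i, b_i` of `ℂ[z_{i+1},…,z_n]` with `{z_i, f} = z_i a_i(f) + b_i(f)` and
elements `h_i ∈ 𝔱` with `λ_i(h_i) ≠ 0` and `a_i = h_i|_{ℂ[z_{i+1},…,z_n]}`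
(`ha_deriv`, `hb_deriv`, `hore`, `hlam_h`, `ha_h`); and it is *symmetric*:
`b_i(z_k) ∈ ℂ[z_{i+1},…,z_{k-1}]` for `i < k` (`hb_mem`), and there are `h'_2,…,h'_n ∈ 𝔱`
with `λ_i(h'_i) ≠ 0` for `2 ≤ i ≤ n` and `λ_i(h'_k) = λ_k(h_i)` for `i < k`
(`hlam_h'`, `hlam_hk'`).

Conclusion: with respect to the same `T`-action, `A` is a `T`-Poisson Ore extension in
the reversed order of the variables: for each `2 ≤ k ≤ n` (i.e. `0 < (k:ℕ)`),
`ℂ[z_1,…,z_{k-1}]` is a Poisson subalgebra of `A`, and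
`{f, z_k} = a'_k(f) z_k + b'_k(f)` for all `f ∈ ℂ[z_1,…,z_{k-1}]`, where
`a'_k = h'_k|_{ℂ[z_1,…,z_{k-1}]}` and `b'_k` is the unique derivation of
`ℂ[z_1,…,z_{k-1}]` with `b'_k(z_i) = b_i(z_k)` for `1 ≤ i ≤ k-1`; moreover for every
`h ∈ Lie(T)`, `[h|_{ℂ[z_1,…,z_{k-1}]}, b'_k] = λ_k(h) b'_k` as derivations of
`ℂ[z_1,…,z_{k-1}]`. -/
theorem statement_17
    (n : ℕ) (𝔱 : Type*) [AddCommGroup 𝔱] [Module ℂ 𝔱]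
    (lam : Fin n → (𝔱 →ₗ[ℂ] ℂ))
    (pb : PA n → PA n → PA n)
    (hadd : ∀ f g h : PA n, pb (f + g) h = pb f h + pb g h)
    (hsmul : ∀ (c : ℂ) (f g : PA n), pb (c • f) g = c • pb f g)
    (hskew : ∀ f g : PA n, pb f g = - pb g f)
    (hleib : ∀ f g h : PA n, pb f (g * h) = pb f g * h + g * pb f h)
    (hjac : ∀ f g h : PA n, pb f (pb g h) + pb g (pb h f) + pb h (pb f g) = 0)
    (hact : ∀ (t : 𝔱) (f g : PA n),
      actD lam t (pb f g) = pb (actD lam t f) g + pb f (actD lam t g))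
    (a b : Fin n → PA n → PA n) (h : Fin n → 𝔱)
    (ha_deriv : ∀ i : Fin n, (i : ℕ) + 1 < n → IsDerivOn (tailAlg n i) (a i))
    (hb_deriv : ∀ i : Fin n, (i : ℕ) + 1 < n → IsDerivOn (tailAlg n i) (b i))
    (hore : ∀ i : Fin n, (i : ℕ) + 1 < n →
      ∀ f ∈ tailAlg n i, pb (X i) f = X i * a i f + b i f)
    (hlam_h : ∀ i : Fin n, (i : ℕ) + 1 < n → lam i (h i) ≠ 0)
    (ha_h : ∀ i : Fin n, (i : ℕ) + 1 < n → ∀ f ∈ tailAlg n i, a i f = actD lam (h i) f)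
    (hb_mem : ∀ i k : Fin n, i < k →
      b i (X k) ∈ MvPolynomial.supported ℂ {j : Fin n | i < j ∧ j < k})
    (h' : Fin n → 𝔱)
    (hlam_h' : ∀ i : Fin n, 0 < (i : ℕ) → lam i (h' i) ≠ 0)
    (hlam_hk' : ∀ i k : Fin n, i < k → lam i (h' k) = lam k (h i)) :
    ∀ k : Fin n, 0 < (k : ℕ) →
      (∀ f ∈ headAlg n k, ∀ g ∈ headAlg n k, pb f g ∈ headAlg n k) ∧
      ∃ b' : PA n → PA n,
        IsDerivOn (headAlg n k) b' ∧
        (∀ i : Fin n, i < k → b' (X i) = b i (X k)) ∧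
        (∀ b'' : PA n → PA n, IsDerivOn (headAlg n k) b'' →
          (∀ i : Fin n, i < k → b'' (X i) = b i (X k)) →
          ∀ f ∈ headAlg n k, b'' f = b' f) ∧
        (∀ f ∈ headAlg n k, pb f (X k) = actD lam (h' k) f * X k + b' f) ∧
        (∀ t : 𝔱, ∀ f ∈ headAlg n k,
          actD lam t (b' f) - b' (actD lam t f) = lam k t • b' f) :=
  statement_17_general n 𝔱 lam pb hadd hsmul hskew hleib hact a b h hore ha_h hb_mem h' hlam_hk'
end
end

section
/- Let V be a finite-dimensional vector space, π ∈ ∧²V, and let V₁, V₂ be subspaces of V such that π(ξ, ζ) = 0 for all ξ in the annihilator V₁⁰ ⊂ V* and ζ in the annihilator V₂⁰ ⊂ V*. For j = 1, 2 let ρ_j: V → V/V_j be the projection (inducing ρ_j: ∧²V → ∧²(V/V_j)). Suppose U ⊂ V is coisotropic with respect to π (i.e. π ∈ U ∧ V) and that ρ₁|_U: U → V/V₁ is a linear isomorphism. Let ψ = ρ₂ ∘ (ρ₁|_U)^{−1}: V/V₁ → V/V₂. Then the induced map on bivectors satisfies ψ(ρ₁(π)) = −ρ₂(π). -/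
/-!
Let `P = U.subtype ∘ (ρ₁|_U)⁻¹ ∘ ρ₁` be the projection of `V` onto `U` along `V₁`, so that
`ψ ∘ ρ₁ = ρ₂ ∘ P`. In finite dimension a bivector is determined by its values on pairs of
covectors, and the covectors on `V/V₂` are the elements of `V₂⁰`. For `ξ, ζ ∈ V₂⁰` the covectors
`ξ - ξ ∘ P` and `ζ - ζ ∘ P` vanish on `U`, so coisotropy gives `π(ξ - ξ ∘ P, ζ - ζ ∘ P) = 0`.
Since `ξ ∘ P, ζ ∘ P ∈ V₁⁰`, the cross terms vanish by the hypothesis on `π`, leaving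
`π(ξ ∘ P, ζ ∘ P) = -π(ξ, ζ)`.
-/

noncomputable section

/-- The alternating `2`-form `(v,w) ↦ ξ(v)ζ(w) - ξ(w)ζ(v)` on `V` attached to two
covectors `ξ, ζ ∈ V*`. -/
def altForm2 {V : Type*} [AddCommGroup V] [Module ℂ V] (ξ ζ : Module.Dual ℂ V) :
    V [⋀^Fin 2]→ₗ[ℂ] ℂ :=
  MultilinearMap.alternatization
    ((MultilinearMap.mkPiAlgebra ℂ (Fin 2) ℂ).compLinearMap ![ξ, ζ])

/-- Evaluation of a bivector `π ∈ ⋀²V ⊆ ExteriorAlgebra ℂ V` on a pair of covectors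
`ξ, ζ ∈ V*`: `π(ξ,ζ)`.  (It vanishes on all other graded pieces.) -/
def evalBivec {V : Type*} [AddCommGroup V] [Module ℂ V] (ξ ζ : Module.Dual ℂ V) :
    ExteriorAlgebra ℂ V →ₗ[ℂ] ℂ :=
  ExteriorAlgebra.liftAlternating
    (Function.update (0 : ∀ i, V [⋀^Fin i]→ₗ[ℂ] ℂ) 2 (altForm2 ξ ζ))

/-- The subspace `U₁ ∧ U₂` of `⋀²V` spanned by the wedges `u ∧ w`, `u ∈ U₁`, `w ∈ U₂`
(inside the exterior algebra).  A subspace `U ⊆ V` is *coisotropic* with respect to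
`π ∈ ⋀²V` if `π ∈ U ∧ V`. -/
def wedgeSub {V : Type*} [AddCommGroup V] [Module ℂ V] (U₁ U₂ : Submodule ℂ V) :
    Submodule ℂ (ExteriorAlgebra ℂ V) :=
  Submodule.span ℂ
    {x | ∃ u ∈ U₁, ∃ w ∈ U₂, x = ExteriorAlgebra.ι ℂ u * ExteriorAlgebra.ι ℂ w}

namespace ExteriorAlgebra

variable {R M N : Type*} [CommRing R] [AddCommGroup M] [Module R M] [AddCommGroup N] [Module R N]

lemma ιMulti_two (v : Fin 2 → M) : ιMulti R 2 v = ι R (v 0) * ι R (v 1) := by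
  simp [ιMulti_succ_apply, Matrix.vecTail]

lemma exteriorPower_two_eq_span :
    ⋀[R]^2 M = Submodule.span R (Set.range fun p : M × M => ι R p.1 * ι R p.2) := by
  rw [← ιMulti_span_fixedDegree]
  congr 1
  ext x
  constructor
  · rintro ⟨v, rfl⟩
    exact ⟨(v 0, v 1), (ιMulti_two v).symm⟩
  · rintro ⟨⟨v, w⟩, rfl⟩
    exact ⟨![v, w], ιMulti_two _⟩

lemma ι_mul_ι_mem_exteriorPower_two (v w : M) : ι R v * ι R w ∈ ⋀[R]^2 M := by
  rw [exteriorPower_two_eq_span]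
  exact Submodule.subset_span ⟨(v, w), rfl⟩

lemma eqOn_exteriorPower_two {f g : ExteriorAlgebra R M →ₗ[R] N}
    (h : ∀ v w, f (ι R v * ι R w) = g (ι R v * ι R w)) : Set.EqOn f g (⋀[R]^2 M) := by
  rw [exteriorPower_two_eq_span]
  exact LinearMap.eqOn_span' (by rintro _ ⟨⟨v, w⟩, rfl⟩; exact h v w)

lemma map_mem_exteriorPower_two (f : M →ₗ[R] N) {x : ExteriorAlgebra R M}
    (hx : x ∈ ⋀[R]^2 M) : map f x ∈ ⋀[R]^2 N := by
  rw [exteriorPower_two_eq_span] at hx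
  induction hx using Submodule.span_induction with
  | mem x hx =>
    obtain ⟨⟨v, w⟩, rfl⟩ := hx
    rw [map_mul, map_apply_ι, map_apply_ι]
    exact ι_mul_ι_mem_exteriorPower_two _ _
  | zero => simp
  | add x y _ _ hx hy => rw [map_add]; exact add_mem hx hy
  | smul c x _ hx => rw [map_smul]; exact Submodule.smul_mem _ _ hx

lemma ι_mul_ι_eq_sum_basis {ι' : Type*} [Fintype ι'] (b : Module.Basis ι' R M) (v w : M) :
    ι R v * ι R w = ∑ i, ∑ j, (b.repr v i * b.repr w j) • (ι R (b i) * ι R (b j)) := by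
  conv_lhs => rw [← b.sum_repr v, ← b.sum_repr w]
  simp only [map_sum, map_smul, Finset.sum_mul_sum, smul_mul_smul_comm]

end ExteriorAlgebra

open ExteriorAlgebra

section evalBivec

variable {V W : Type*} [AddCommGroup V] [Module ℂ V] [AddCommGroup W] [Module ℂ W]

lemma altForm2_apply (ξ ζ : Module.Dual ℂ V) (v w : V) :
    altForm2 ξ ζ ![v, w] = ξ v * ζ w - ξ w * ζ v := by
  rw [altForm2, MultilinearMap.alternatization_apply,
    show (Finset.univ : Finset (Equiv.Perm (Fin 2))) = {1, Equiv.swap 0 1} by decide,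
    Finset.sum_insert (by decide), Finset.sum_singleton]
  simp [Fin.prod_univ_two, sub_eq_add_neg]

lemma evalBivec_ι_mul_ι (ξ ζ : Module.Dual ℂ V) (v w : V) :
    evalBivec ξ ζ (ι ℂ v * ι ℂ w) = ξ v * ζ w - ξ w * ζ v := by
  rw [evalBivec, liftAlternating_ι_mul, liftAlternating_ι]
  exact altForm2_apply ξ ζ v w

lemma evalBivec_swap (ξ ζ : Module.Dual ℂ V) {x : ExteriorAlgebra ℂ V} (hx : x ∈ ⋀[ℂ]^2 V) :
    evalBivec ζ ξ x = -evalBivec ξ ζ x :=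
  eqOn_exteriorPower_two (g := -evalBivec ξ ζ)
    (fun v w => by simp only [evalBivec_ι_mul_ι, LinearMap.neg_apply]; ring) hx

lemma evalBivec_sub_left (ξ ξ' ζ : Module.Dual ℂ V) {x : ExteriorAlgebra ℂ V}
    (hx : x ∈ ⋀[ℂ]^2 V) : evalBivec (ξ - ξ') ζ x = evalBivec ξ ζ x - evalBivec ξ' ζ x :=
  eqOn_exteriorPower_two (g := evalBivec ξ ζ - evalBivec ξ' ζ)
    (fun v w => by simp only [evalBivec_ι_mul_ι, LinearMap.sub_apply]; ring) hx

lemma evalBivec_sub_right (ξ ζ ζ' : Module.Dual ℂ V) {x : ExteriorAlgebra ℂ V}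
    (hx : x ∈ ⋀[ℂ]^2 V) : evalBivec ξ (ζ - ζ') x = evalBivec ξ ζ x - evalBivec ξ ζ' x :=
  eqOn_exteriorPower_two (g := evalBivec ξ ζ - evalBivec ξ ζ')
    (fun v w => by simp only [evalBivec_ι_mul_ι, LinearMap.sub_apply]; ring) hx

lemma evalBivec_map (f : V →ₗ[ℂ] W) (ξ ζ : Module.Dual ℂ W) {x : ExteriorAlgebra ℂ V}
    (hx : x ∈ ⋀[ℂ]^2 V) : evalBivec ξ ζ (map f x) = evalBivec (ξ ∘ₗ f) (ζ ∘ₗ f) x :=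
  eqOn_exteriorPower_two (f := evalBivec ξ ζ ∘ₗ (map f).toLinearMap)
    (fun v w => by simp [map_apply_ι, evalBivec_ι_mul_ι]) hx

lemma two_smul_eq_sum_evalBivec_smul {ι' : Type*} [Fintype ι'] (b : Module.Basis ι' ℂ V)
    {x : ExteriorAlgebra ℂ V} (hx : x ∈ ⋀[ℂ]^2 V) :
    (2 : ℂ) • x = ∑ i, ∑ j, evalBivec (b.coord i) (b.coord j) x • (ι ℂ (b i) * ι ℂ (b j)) := by
  have hlin := eqOn_exteriorPower_two (f := (2 : ℂ) • LinearMap.id)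
    (g := ∑ i, ∑ j, (evalBivec (b.coord i) (b.coord j)).smulRight (ι ℂ (b i) * ι ℂ (b j)))
    ?_ hx
  · simpa using hlin
  intro v w
  have hswap : ι ℂ w * ι ℂ v = -(ι ℂ v * ι ℂ w) := eq_neg_of_add_eq_zero_right (ι_add_mul_swap v w)
  simp only [LinearMap.smul_apply, LinearMap.id_apply, LinearMap.sum_apply,
    LinearMap.smulRight_apply, evalBivec_ι_mul_ι, Module.Basis.coord_apply, sub_smul,
    Finset.sum_sub_distrib, ← ι_mul_ι_eq_sum_basis]
  rw [hswap, sub_neg_eq_add, two_smul]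

lemma eq_of_forall_evalBivec_eq [FiniteDimensional ℂ V] {x y : ExteriorAlgebra ℂ V}
    (hx : x ∈ ⋀[ℂ]^2 V) (hy : y ∈ ⋀[ℂ]^2 V) (h : ∀ ξ ζ, evalBivec ξ ζ x = evalBivec ξ ζ y) :
    x = y := by
  have hx2 := two_smul_eq_sum_evalBivec_smul (Module.finBasis ℂ V) hx
  simp_rw [h, ← two_smul_eq_sum_evalBivec_smul (Module.finBasis ℂ V) hy] at hx2
  exact smul_right_injective _ two_ne_zero hx2

lemma evalBivec_eq_zero_of_mem_wedgeSub {U U' : Submodule ℂ V} {ξ ζ : Module.Dual ℂ V}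
    (hξ : ξ ∈ U.dualAnnihilator) (hζ : ζ ∈ U.dualAnnihilator) {x : ExteriorAlgebra ℂ V}
    (hx : x ∈ wedgeSub U U') : evalBivec ξ ζ x = 0 := by
  rw [Submodule.mem_dualAnnihilator] at hξ hζ
  induction hx using Submodule.span_induction with
  | mem x hx =>
    obtain ⟨u, hu, w, -, rfl⟩ := hx
    simp [evalBivec_ι_mul_ι, hξ u hu, hζ u hu]
  | zero => simp
  | add x y _ _ hx hy => simp [hx, hy]
  | smul c x _ hx => simp [hx]

end evalBivec

section coisotropic

variable {V : Type*} [AddCommGroup V] [Module ℂ V]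

theorem evalBivec_comp_eq_neg {π : ExteriorAlgebra ℂ V} (hπ : π ∈ ⋀[ℂ]^2 V)
    {U V₁ V₂ : Submodule ℂ V}
    (hpair : ∀ ξ ∈ V₁.dualAnnihilator, ∀ ζ ∈ V₂.dualAnnihilator, evalBivec ξ ζ π = 0)
    (hco : π ∈ wedgeSub U ⊤) {P : V →ₗ[ℂ] V} (hPU : ∀ u ∈ U, P u = u)
    (hPV₁ : ∀ v ∈ V₁, P v = 0) {ξ ζ : Module.Dual ℂ V} (hξ : ξ ∈ V₂.dualAnnihilator)
    (hζ : ζ ∈ V₂.dualAnnihilator) :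
    evalBivec (ξ ∘ₗ P) (ζ ∘ₗ P) π = -evalBivec ξ ζ π := by
  have hU (η : Module.Dual ℂ V) : η - η ∘ₗ P ∈ U.dualAnnihilator :=
    (Submodule.mem_dualAnnihilator _).2 fun u hu => by simp [hPU u hu]
  have hV₁ (η : Module.Dual ℂ V) : η ∘ₗ P ∈ V₁.dualAnnihilator :=
    (Submodule.mem_dualAnnihilator _).2 fun v hv => by simp [hPV₁ v hv]
  have hcoiso := evalBivec_eq_zero_of_mem_wedgeSub (hU ξ) (hU ζ) hco
  rw [evalBivec_sub_left _ _ _ hπ, evalBivec_sub_right _ _ _ hπ,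
    evalBivec_sub_right _ _ _ hπ] at hcoiso
  have hleft : evalBivec (ξ ∘ₗ P) ζ π = 0 := hpair _ (hV₁ ξ) _ hζ
  have hright : evalBivec ξ (ζ ∘ₗ P) π = 0 := by
    rw [evalBivec_swap _ _ hπ, hpair _ (hV₁ ζ) _ hξ, neg_zero]
  linear_combination hcoiso + hleft + hright

end coisotropic

/-- Lemma A.2 of the paper.
Let `V` be a finite-dimensional vector space, `π ∈ ⋀²V` (an element of the exterior
algebra lying in the second exterior power), and let `V₁, V₂ ⊆ V` be subspaces such that
`π(ξ, ζ) = 0` for all `ξ` in the annihilator `V₁⁰ ⊆ V*` and `ζ` in the annihilator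
`V₂⁰ ⊆ V*`.  For `j = 1, 2` let `ρ_j : V → V/V_j` be the projection, inducing
`ExteriorAlgebra.map ρ_j` on bivectors.  Suppose `U ⊆ V` is coisotropic with respect to
`π` (i.e. `π ∈ U ∧ V`) and `ρ₁|_U : U → V/V₁` is a linear isomorphism (hypothesis
`hbij`), and let `ψ = ρ₂ ∘ (ρ₁|_U)⁻¹ : V/V₁ → V/V₂`.  Then the induced map on bivectors
satisfies `ψ(ρ₁(π)) = -ρ₂(π)`. -/
theorem statement_19
    (V : Type*) [AddCommGroup V] [Module ℂ V] [FiniteDimensional ℂ V]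
    (π : ExteriorAlgebra ℂ V) (hπ : π ∈ ⋀[ℂ]^2 V)
    (V₁ V₂ : Submodule ℂ V)
    (hpair : ∀ ξ ∈ V₁.dualAnnihilator, ∀ ζ ∈ V₂.dualAnnihilator, evalBivec ξ ζ π = 0)
    (U : Submodule ℂ V)
    (hco : π ∈ wedgeSub U ⊤)
    (hbij : Function.Bijective (V₁.mkQ ∘ₗ U.subtype)) :
    ExteriorAlgebra.map
        (V₂.mkQ ∘ₗ U.subtype ∘ₗ
          (LinearEquiv.ofBijective (V₁.mkQ ∘ₗ U.subtype) hbij).symm.toLinearMap)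
        (ExteriorAlgebra.map V₁.mkQ π) =
      - ExteriorAlgebra.map V₂.mkQ π := by
  set e := LinearEquiv.ofBijective (V₁.mkQ ∘ₗ U.subtype) hbij
  set P : V →ₗ[ℂ] V := U.subtype ∘ₗ e.symm.toLinearMap ∘ₗ V₁.mkQ
  have hψ : (V₂.mkQ ∘ₗ U.subtype ∘ₗ e.symm.toLinearMap) ∘ₗ V₁.mkQ = V₂.mkQ ∘ₗ P := by
    simp only [P, LinearMap.comp_assoc]
  have hPU : ∀ u ∈ U, P u = u := fun u hu => congrArg U.subtype (e.symm_apply_apply ⟨u, hu⟩)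
  have hPV₁ : ∀ v ∈ V₁, P v = 0 := fun v hv => by
    simp [P, (Submodule.Quotient.mk_eq_zero V₁).2 hv]
  -- with `P` opaque, the composites below are compared syntactically instead of by unfolding
  clear_value P
  have hmkQ (ξ : Module.Dual ℂ (V ⧸ V₂)) : ξ ∘ₗ V₂.mkQ ∈ V₂.dualAnnihilator :=
    V₂.range_dualMap_mkQ_eq ▸ LinearMap.mem_range_self _ ξ
  rw [← AlgHom.comp_apply, map_comp_map, hψ]
  refine eq_of_forall_evalBivec_eq (map_mem_exteriorPower_two _ hπ)
    (neg_mem (map_mem_exteriorPower_two _ hπ)) fun ξ ζ => ?_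
  rw [map_neg, evalBivec_map _ _ _ hπ, evalBivec_map _ _ _ hπ, ← LinearMap.comp_assoc,
    ← LinearMap.comp_assoc]
  exact evalBivec_comp_eq_neg hπ hpair hco hPU hPV₁ (hmkQ ξ) (hmkQ ζ)
end
end
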